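/- Let T be a bounded linear operator on a complex Hilbert space H with R(T) ⊆ R(T*) and R(T) closed, and let T' := T restricted to N(T)⊥ (a bounded operator on the Hilbert space N(T)⊥). The following are equivalent: (a) 0 is not in the residual spectrum of T'; (b) T' is invertible (bijective with bounded inverse); (c) R(T*) ⊆ R(T) (i.e., T is coposinormal); (d) 0 is not a limit point of the spectrum σ(T). -/

import Mathlib

/-!
Along `H = N(T) ⊕ N(T)ᗮ` the operator `T` is `0 ⊕ T'`, and `T'` is injective with closed range,
i.e. bounded below. Hence `T'` is invertible iff its range is dense, iff its range `N(T)ᗮ`, the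
closure of `R(T*)`, lies in the closed subspace `R(T)`. For `z ≠ 0` the diagonal form gives
`z ∈ σ(T) ↔ z ∈ σ(T')`. Finally, if `‖x‖ ≤ C ‖T' x‖` and `T' - z` is invertible with `2 C |z| < 1`,
then `‖(T' - z)⁻¹‖ ≤ 2 C` and `T'` is a Neumann-series perturbation of `T' - z`, so `T'` is invertible;
thus `T'` is invertible as soon as `0` is not a limit point of `σ(T')`.
-/

/-- The residual spectrum of a bounded operator `S`: the set of `z ∈ ℂ` such that
`S - z I` is injective but does not have dense range. -/
def residualSpectrum {E : Type*} [NormedAddCommGroup E] [NormedSpace ℂ E]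
    (S : E →L[ℂ] E) : Set ℂ :=
  {z | Function.Injective (S - z • (1 : E →L[ℂ] E)) ∧
        ¬ Dense (Set.range (S - z • (1 : E →L[ℂ] E)))}

open Function Filter Topology NNReal

section BoundedBelow

variable {𝕜 E : Type*} [NontriviallyNormedField 𝕜] [NormedAddCommGroup E] [NormedSpace 𝕜 E]
  [CompleteSpace E]

namespace ContinuousLinearMap

theorem isUnit_of_isUnit_algebraMap_sub {S : E →L[𝕜] E} {C : ℝ≥0} (hS : AntilipschitzWith C S)
    {z : 𝕜} (hz : 2 * C * ‖z‖ < 1) (hu : IsUnit (algebraMap 𝕜 (E →L[𝕜] E) z - S)) :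
    IsUnit S := by
  obtain ⟨u, hu⟩ := hu
  set v : E →L[𝕜] E := ↑u⁻¹
  have hv : ∀ y, z • v y - S (v y) = y := fun y => by
    simpa [hu, Algebra.algebraMap_eq_smul_one] using congr($(u.mul_inv) y)
  have hv_norm : ‖v‖ ≤ 2 * C := by
    refine opNorm_le_bound _ (by positivity) fun y => ?_
    have h := calc ‖v y‖ ≤ C * ‖S (v y)‖ := hS.le_mul_norm (map_zero S) _
      _ = C * ‖z • v y - y‖ := by rw [eq_sub_of_add_eq (sub_eq_iff_eq_add'.mp (hv y)).symm]
      _ ≤ C * (‖z‖ * ‖v y‖ + ‖y‖) := by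
          gcongr; exact (norm_sub_le _ _).trans_eq (by rw [norm_smul])
    nlinarith [norm_nonneg (v y), norm_nonneg y]
  have hsmall : ‖z • v‖ < 1 := calc
    ‖z • v‖ ≤ ‖z‖ * (2 * C) := (norm_smul_le z v).trans (by gcongr)
    _ < 1 := by linarith
  -- `(z - S) (1 - z v) = -S`, and `1 - z v` is invertible by the Neumann series
  have hS_eq : S = -(↑u * (1 - z • v)) := by
    rw [mul_sub, mul_one, mul_smul_comm, Units.mul_inv, hu, Algebra.algebraMap_eq_smul_one]
    abel
  rw [hS_eq]
  exact (u.isUnit.mul (Units.oneSub _ hsmall).isUnit).neg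

theorem isUnit_iff_not_accPt_spectrum {S : E →L[𝕜] E} {C : ℝ≥0} (hS : AntilipschitzWith C S) :
    IsUnit S ↔ ¬AccPt 0 (𝓟 (spectrum 𝕜 S)) := by
  simp only [accPt_iff_frequently, not_frequently, not_and]
  constructor
  · intro hu
    filter_upwards [(spectrum.isClosed S).isOpen_compl.mem_nhds (spectrum.zero_notMem 𝕜 hu)]
      with y hy _ using hy
  · intro h
    have hsmall : ∀ᶠ y : 𝕜 in 𝓝 0, 2 * C * ‖y‖ < 1 :=
      ((continuous_const.mul continuous_norm).tendsto' 0 0 (by simp)).eventually_lt_const one_pos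
    obtain ⟨y, ⟨hy, hy_small⟩, hy0⟩ :=
      ((h.and hsmall).filter_mono (nhdsWithin_le_nhds (s := {0}ᶜ))
        |>.and self_mem_nhdsWithin).exists
    exact isUnit_of_isUnit_algebraMap_sub hS hy_small (spectrum.notMem_iff.mp (hy hy0))

end ContinuousLinearMap

end BoundedBelow

theorem zero_notMem_residualSpectrum_iff {E : Type*} [NormedAddCommGroup E] [NormedSpace ℂ E]
    [CompleteSpace E] {S : E →L[ℂ] E} (hinj : Injective S) (hcl : IsClosed (Set.range S)) :
    0 ∉ residualSpectrum S ↔ IsUnit S := by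
  rw [residualSpectrum, Set.mem_ofPred_eq, zero_smul, sub_zero, dense_iff_closure_eq,
    hcl.closure_eq, Set.range_eq_univ, ContinuousLinearMap.isUnit_iff_bijective, Bijective]
  tauto

section Decomposition

variable {𝕜 H : Type*} [RCLike 𝕜] [NormedAddCommGroup H] [InnerProductSpace 𝕜 H]
  {K : Submodule 𝕜 H} {T : H →L[𝕜] H} {T' : Kᗮ →L[𝕜] Kᗮ}

-- Under `H ≃ K × Kᗮ`, `z - T` becomes the diagonal map `z ⊕ (z - T')`.
theorem bijective_algebraMap_sub_iff [K.HasOrthogonalProjection] (hK : K ≤ T.ker)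
    (hT' : ∀ x, (T' x : H) = T x) (z : 𝕜) :
    Bijective (algebraMap 𝕜 (H →L[𝕜] H) z - T) ↔
      Bijective (fun x : K => z • x) ∧ Bijective (algebraMap 𝕜 (Kᗮ →L[𝕜] Kᗮ) z - T') := by
  let e := Submodule.prodEquivOfIsCompl K Kᗮ K.isCompl_orthogonal
  have hdiag : (algebraMap 𝕜 (H →L[𝕜] H) z - T) ∘ e =
      e ∘ Prod.map (fun x : K => z • x) (algebraMap 𝕜 (Kᗮ →L[𝕜] Kᗮ) z - T') := by
    ext ⟨a, b⟩
    have hTa : T a = 0 := hK a.2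
    simp [e, Algebra.algebraMap_eq_smul_one, hT', hTa]
    abel
  rw [← Bijective.of_comp_iff _ e.bijective, hdiag, e.bijective.of_comp_iff', Prod.map_bijective]

theorem mem_spectrum_iff_of_ne_zero [CompleteSpace H] [K.HasOrthogonalProjection]
    (hK : K ≤ T.ker) (hT' : ∀ x, (T' x : H) = T x) {z : 𝕜} (hz : z ≠ 0) :
    z ∈ spectrum 𝕜 T ↔ z ∈ spectrum 𝕜 T' := by
  have hsmul : Bijective (fun x : K => z • x) := (LinearEquiv.smulOfNeZero 𝕜 K z hz).bijective
  simp only [spectrum.mem_iff, ContinuousLinearMap.isUnit_iff_bijective,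
    bijective_algebraMap_sub_iff hK hT', hsmul, true_and]

theorem accPt_zero_spectrum_iff [CompleteSpace H] [K.HasOrthogonalProjection]
    (hK : K ≤ T.ker) (hT' : ∀ x, (T' x : H) = T x) :
    AccPt 0 (𝓟 (spectrum 𝕜 T)) ↔ AccPt 0 (𝓟 (spectrum 𝕜 T')) := by
  have h : ∀ z, z ≠ 0 ∧ z ∈ spectrum 𝕜 T ↔ z ≠ 0 ∧ z ∈ spectrum 𝕜 T' :=
    fun z => and_congr_right (mem_spectrum_iff_of_ne_zero hK hT')
  simp only [accPt_iff_frequently, h]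

end Decomposition

section Restriction

variable {𝕜 H : Type*} [RCLike 𝕜] [NormedAddCommGroup H] [InnerProductSpace 𝕜 H]
  {T : H →L[𝕜] H} {T' : T.kerᗮ →L[𝕜] T.kerᗮ}

theorem injective_of_restrict_orthogonal_ker (hT' : ∀ x, (T' x : H) = T x) : Injective T' := by
  refine (injective_iff_map_eq_zero T').mpr fun x hx => ?_
  have hTx : (x : H) ∈ T.ker := by simp [LinearMap.mem_ker, ← hT', hx]
  exact Subtype.ext (T.ker.orthogonal_disjoint.le_bot ⟨hTx, x.2⟩)

theorem range_of_restrict_orthogonal_ker [T.ker.HasOrthogonalProjection]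
    (hT' : ∀ x, (T' x : H) = T x) :
    Set.range T' = Subtype.val ⁻¹' Set.range T := by
  ext y
  constructor
  · rintro ⟨x, rfl⟩
    exact ⟨x, (hT' x).symm⟩
  · rintro ⟨x, hx⟩
    obtain ⟨x₀, hx₀, x₁, hx₁, rfl⟩ := T.ker.exists_add_mem_mem_orthogonal x
    have hTx₀ : T x₀ = 0 := hx₀
    refine ⟨⟨x₁, hx₁⟩, Subtype.ext ?_⟩
    rw [hT', ← hx, map_add, hTx₀, zero_add]

variable [CompleteSpace H]

theorem isUnit_restrict_orthogonal_ker_iff (hT' : ∀ x, (T' x : H) = T x)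
    (hclosed : IsClosed (Set.range T)) :
    IsUnit T' ↔ (ContinuousLinearMap.adjoint T).range ≤ T.range := by
  have hsurj : Surjective T' ↔ T.kerᗮ ≤ T.range := by
    rw [← Set.range_eq_univ, range_of_restrict_orthogonal_ker hT', Set.eq_univ_iff_forall]
    exact ⟨fun h y hy => h ⟨y, hy⟩, fun h y => h y.2⟩
  have hclosed' : IsClosed (T.range : Set H) := by rwa [LinearMap.coe_range]
  rw [ContinuousLinearMap.isUnit_iff_bijective, Bijective,
    and_iff_right (injective_of_restrict_orthogonal_ker hT'), hsurj, T.orthogonal_ker]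
  exact ⟨(Submodule.le_topologicalClosure _).trans,
    fun h => Submodule.topologicalClosure_minimal _ h hclosed'⟩

end Restriction

theorem stmt9 {H : Type*} [NormedAddCommGroup H] [InnerProductSpace ℂ H] [CompleteSpace H]
    (T : H →L[ℂ] H)
    (hclosed : IsClosed (Set.range T))
    (T' : (LinearMap.ker (T : H →ₗ[ℂ] H))ᗮ →L[ℂ] (LinearMap.ker (T : H →ₗ[ℂ] H))ᗮ)
    (hT' : ∀ x : (LinearMap.ker (T : H →ₗ[ℂ] H))ᗮ, (T' x : H) = T x) :
    List.TFAE
      [(0 : ℂ) ∉ residualSpectrum T',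
       IsUnit T',
       LinearMap.range (ContinuousLinearMap.adjoint T : H →ₗ[ℂ] H) ≤ LinearMap.range (T : H →ₗ[ℂ] H),
       ¬ AccPt (0 : ℂ) (Filter.principal (spectrum ℂ T))] := by
  have hinj := injective_of_restrict_orthogonal_ker hT'
  have hclosed' : IsClosed (Set.range T') := by
    rw [range_of_restrict_orthogonal_ker hT']
    exact hclosed.preimage continuous_subtype_val
  obtain ⟨C, hC⟩ := T'.antilipschitz_of_injective_of_isClosed_range hinj hclosed'
  tfae_have 1 ↔ 2 := zero_notMem_residualSpectrum_iff hinj hclosed'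
  tfae_have 2 ↔ 3 := isUnit_restrict_orthogonal_ker_iff hT' hclosed
  tfae_have 2 ↔ 4 := by
    rw [T'.isUnit_iff_not_accPt_spectrum hC, accPt_zero_spectrum_iff le_rfl hT']
  tfae_finish
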